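/- arXiv:math-ph/0310033 — 2 statements merged into one kernel-verified Lean document; each statement's English description precedes it below -/
import Mathlib

section
/- For R > 1 define V_R(x) := Σ_{j=(j₁,j₂)∈ℤ^{d₁}×ℤ^{d₂}, |j₂| > R−1} sup_{y∈Λ_j} f(x − y) ∈ [0,∞]. Then: (i) for every Borel measure ν on ℝ^d with ν(Λ_j) ≤ 1 for all j ∈ ℤ^d and every x ∈ ℝ^d, ∫_{{y : |y₂| > R}} f(x − y) ν(dy) ≤ V_R(x); and (ii) there exist c > 0 and R₀ > 1 such that sup_{x∈Λ₀} V_R(x) ≤ c · R^{−α₂(1−γ)} for all R ≥ R₀. -/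
open MeasureTheory ENNReal

noncomputable section

/-- The half-open unit cube `Λ_j = j + [-1/2, 1/2)^d` centred at the lattice point `j`. -/
def cube (d : ℕ) (j : Fin d → ℤ) : Set (Fin d → ℝ) :=
  {x | ∀ i, (j i : ℝ) - 1/2 ≤ x i ∧ x i < (j i : ℝ) + 1/2}

/-- The unit cube in the product space `ℝ^{d₁} × ℝ^{d₂}` centred at the lattice point `j`. -/
def cubeP (d₁ d₂ : ℕ) (j : (Fin d₁ → ℤ) × (Fin d₂ → ℤ)) :
    Set ((Fin d₁ → ℝ) × (Fin d₂ → ℝ)) :=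
  (cube d₁ j.1) ×ˢ (cube d₂ j.2)

open scoped Classical in
/-- `V_R(x) := Σ_{j = (j₁,j₂), |j₂| > R-1} sup_{y ∈ Λ_j} f(x - y) ∈ [0,∞]`. -/
def VR (d₁ d₂ : ℕ) (f : (Fin d₁ → ℝ) × (Fin d₂ → ℝ) → ℝ) (R : ℝ)
    (x : (Fin d₁ → ℝ) × (Fin d₂ → ℝ)) : ℝ≥0∞ :=
  ∑' j : (Fin d₁ → ℤ) × (Fin d₂ → ℤ),
    if R - 1 < ‖j.2‖ then ⨆ y ∈ cubeP d₁ d₂ j, ENNReal.ofReal (f (x - y)) else 0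

/-!
(i) The region `{|y₂| > R}` is covered by the cubes `Λ_j` with `|j₂| > R - 1`, and since
`ν(Λ_j) ≤ 1` the integral over each cube is at most the supremum of the integrand there.

(ii) For `x ∈ Λ₀` and `y ∈ Λ_j` we have `|xₖ - yₖ| ≥ |jₖ| - 1`, so the upper bound on `f`
dominates `V_R(x)` by the lattice sum of `f₀ / ((|j₁| - 1)₊^{α₁} + (|j₂| - 1)^{α₂})`.
Summing over `j₁` with `T = (|j₂| - 1)^{α₂}` fixed gives `≲ T^{γ₁ - 1}`: the terms are
`≤ 1/T` on the `≲ T^{γ₁}` points with `|j₁| ≤ T^{1/α₁}` and `≲ |j₁|^{-α₁}` beyond. Summing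
the result over `|j₂| > R - 1` gives `≲ R^{d₂ - α₂(1 - γ₁)} = R^{-α₂(1 - γ)}`. Both steps
rest on the tail bound `Σ_{|j| ≥ S} |j|^{-β} ≲ S^{d - β}` for `β > d`, proved by charging
`|j|^{-β}` to the ball of radius `2^{k+1} S` when `2^k S ≤ |j| < 2^{k+1} S`.
-/

section LatticeSums

variable {d : ℕ}

lemma tsum_ite_norm_le_le {ρ : ℝ} (hρ : 0 ≤ ρ) (c : ℝ≥0∞) :
    ∑' j : Fin d → ℤ, (if ‖j‖ ≤ ρ then c else 0) ≤ ENNReal.ofReal ((2 * ρ + 1) ^ d) * c := by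
  classical
  set s := Fintype.piFinset fun _ : Fin d => Finset.Icc (-⌊ρ⌋) ⌊ρ⌋
  have hmem (j : Fin d → ℤ) : ‖j‖ ≤ ρ ↔ j ∈ s := by
    rw [Fintype.mem_piFinset, pi_norm_le_iff_of_nonneg hρ]
    refine forall_congr' fun i => ?_
    rw [Finset.mem_Icc, ← abs_le, Int.le_floor, Int.cast_abs, Int.norm_eq_abs]
  have hcard : (s.card : ℝ) ≤ (2 * ρ + 1) ^ d := by
    have hfl : 0 ≤ ⌊ρ⌋ := Int.floor_nonneg.mpr hρ
    simp only [s, Fintype.card_piFinset, Int.card_Icc, Finset.prod_const, Finset.card_univ,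
      Fintype.card_fin, Nat.cast_pow]
    gcongr
    rw [show ⌊ρ⌋ + 1 - -⌊ρ⌋ = 2 * ⌊ρ⌋ + 1 by ring, ← Int.cast_natCast,
      Int.toNat_of_nonneg (by omega)]
    push_cast
    linarith [Int.floor_le ρ]
  rw [tsum_eq_sum (s := s) fun j hj => if_neg (mt (hmem j).1 hj)]
  calc ∑ j ∈ s, (if ‖j‖ ≤ ρ then c else 0) ≤ s.card * c := by
        simpa using Finset.sum_le_card_nsmul s _ c fun j _ => by split_ifs <;> simp
    _ ≤ ENNReal.ofReal ((2 * ρ + 1) ^ d) * c := by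
        gcongr
        rw [← ENNReal.ofReal_natCast]
        exact ENNReal.ofReal_le_ofReal hcard

lemma exists_tsum_norm_rpow_neg_tail_le {β : ℝ} (hβ : (d : ℝ) < β) :
    ∃ C : ℝ≥0∞, C ≠ ∞ ∧ ∀ S : ℝ, 1 ≤ S →
      ∑' j : Fin d → ℤ, (if S ≤ ‖j‖ then ENNReal.ofReal (‖j‖ ^ (-β)) else 0) ≤
        C * ENNReal.ofReal (S ^ ((d : ℝ) - β)) := by
  set r := ENNReal.ofReal ((2 : ℝ) ^ ((d : ℝ) - β))
  have hr : r < 1 := by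
    rw [ENNReal.ofReal_lt_one]
    exact Real.rpow_lt_one_of_one_lt_of_neg one_lt_two (by linarith)
  refine ⟨ENNReal.ofReal (5 ^ d) * (1 - r)⁻¹,
    ENNReal.mul_ne_top ENNReal.ofReal_ne_top (ENNReal.inv_ne_top.2 (tsub_pos_of_lt hr).ne'),
    fun S hS => ?_⟩
  have hS0 : 0 < S := by linarith
  have hdyadic (j : Fin d → ℤ) : (if S ≤ ‖j‖ then ENNReal.ofReal (‖j‖ ^ (-β)) else 0) ≤
      ∑' k : ℕ, if ‖j‖ ≤ 2 ^ (k + 1) * S then ENNReal.ofReal ((2 ^ k * S) ^ (-β)) else 0 := by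
    split_ifs with hj
    · obtain ⟨k, hk, hk'⟩ := exists_nat_pow_near ((one_le_div hS0).2 hj) one_lt_two
      rw [le_div_iff₀ hS0] at hk
      rw [div_lt_iff₀ hS0] at hk'
      refine le_trans ?_ (ENNReal.le_tsum k)
      rw [if_pos hk'.le]
      exact ENNReal.ofReal_le_ofReal
        (Real.rpow_le_rpow_of_nonpos (by positivity) hk (by linarith [Nat.cast_nonneg (α := ℝ) d]))
    · exact zero_le
  have hball (k : ℕ) :
      ∑' j : Fin d → ℤ,
          (if ‖j‖ ≤ 2 ^ (k + 1) * S then ENNReal.ofReal ((2 ^ k * S) ^ (-β)) else 0) ≤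
        ENNReal.ofReal (5 ^ d * S ^ ((d : ℝ) - β)) * r ^ k := by
    refine (tsum_ite_norm_le_le (by positivity) _).trans ?_
    rw [← ENNReal.ofReal_mul (by positivity), ← ENNReal.ofReal_pow (by positivity),
      ← ENNReal.ofReal_mul (by positivity)]
    apply ENNReal.ofReal_le_ofReal
    have ht : 1 ≤ 2 ^ k * S := one_le_mul_of_one_le_of_one_le (one_le_pow₀ one_le_two) hS
    calc (2 * (2 ^ (k + 1) * S) + 1) ^ d * (2 ^ k * S) ^ (-β)
        ≤ (5 * (2 ^ k * S)) ^ d * (2 ^ k * S) ^ (-β) := by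
          gcongr
          rw [pow_succ]
          linarith
      _ = 5 ^ d * S ^ ((d : ℝ) - β) * (2 ^ ((d : ℝ) - β)) ^ k := by
          rw [mul_pow, mul_assoc, ← Real.rpow_natCast (2 ^ k * S), ← Real.rpow_add (by positivity),
            ← sub_eq_add_neg, Real.mul_rpow (by positivity) hS0.le,
            Real.rpow_pow_comm zero_le_two]
          ring
  calc ∑' j : Fin d → ℤ, (if S ≤ ‖j‖ then ENNReal.ofReal (‖j‖ ^ (-β)) else 0)
      ≤ ∑' (j : Fin d → ℤ) (k : ℕ),
          if ‖j‖ ≤ 2 ^ (k + 1) * S then ENNReal.ofReal ((2 ^ k * S) ^ (-β)) else 0 :=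
        ENNReal.tsum_le_tsum hdyadic
    _ = ∑' (k : ℕ) (j : Fin d → ℤ),
          if ‖j‖ ≤ 2 ^ (k + 1) * S then ENNReal.ofReal ((2 ^ k * S) ^ (-β)) else 0 :=
        ENNReal.tsum_comm
    _ ≤ ∑' k : ℕ, ENNReal.ofReal (5 ^ d * S ^ ((d : ℝ) - β)) * r ^ k :=
        ENNReal.tsum_le_tsum hball
    _ = ENNReal.ofReal (5 ^ d) * (1 - r)⁻¹ * ENNReal.ofReal (S ^ ((d : ℝ) - β)) := by
        rw [ENNReal.tsum_mul_left, ENNReal.tsum_geometric, ENNReal.ofReal_mul (by positivity)]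
        ring

lemma div_two_rpow_le_max_sub_one_rpow_add {t α T : ℝ} (ht : 0 ≤ t) (hα : 0 < α)
    (hT : 1 ≤ T) : (t / 2) ^ α ≤ max (t - 1) 0 ^ α + T := by
  have hmax : 0 ≤ max (t - 1) 0 ^ α := Real.rpow_nonneg (le_max_right _ _) _
  rcases le_or_gt 2 t with h | h
  · have : (t / 2) ^ α ≤ max (t - 1) 0 ^ α :=
      Real.rpow_le_rpow (by positivity) (le_max_of_le_left (by linarith)) hα.le
    linarith
  · have : (t / 2) ^ α ≤ 1 := Real.rpow_le_one (by positivity) (by linarith) hα.le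
    linarith

lemma exists_tsum_inv_max_sub_one_rpow_add_le {α : ℝ} (hdα : (d : ℝ) < α) :
    ∃ C : ℝ≥0∞, C ≠ ∞ ∧ ∀ T : ℝ, 1 ≤ T →
      ∑' j : Fin d → ℤ, ENNReal.ofReal (1 / (max (‖j‖ - 1) 0 ^ α + T)) ≤
        C * ENNReal.ofReal (T ^ ((d : ℝ) / α - 1)) := by
  have hα : 0 < α := lt_of_le_of_lt (Nat.cast_nonneg d) hdα
  obtain ⟨C₀, hC₀, htail⟩ := exists_tsum_norm_rpow_neg_tail_le hdα
  refine ⟨ENNReal.ofReal (3 ^ d) + ENNReal.ofReal (2 ^ α) * C₀,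
    ENNReal.add_ne_top.2 ⟨ENNReal.ofReal_ne_top, ENNReal.mul_ne_top ENNReal.ofReal_ne_top hC₀⟩,
    fun T hT => ?_⟩
  have hT0 : 0 < T := by linarith
  set S := T ^ α⁻¹
  have hS : 1 ≤ S := Real.one_le_rpow hT (inv_nonneg.2 hα.le)
  have hSd : (2 * S + 1) ^ d * (1 / T) ≤ 3 ^ d * T ^ ((d : ℝ) / α - 1) := by
    calc (2 * S + 1) ^ d * (1 / T) ≤ (3 * S) ^ d * (1 / T) := by gcongr; linarith
      _ = 3 ^ d * T ^ ((d : ℝ) / α - 1) := by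
        rw [mul_pow, ← Real.rpow_natCast S, ← Real.rpow_mul hT0.le, Real.rpow_sub hT0,
          Real.rpow_one, inv_mul_eq_div]
        ring
  have hSdα : S ^ ((d : ℝ) - α) = T ^ ((d : ℝ) / α - 1) := by
    rw [← Real.rpow_mul hT0.le]
    congr 1
    field_simp
  have hsplit (j : Fin d → ℤ) : ENNReal.ofReal (1 / (max (‖j‖ - 1) 0 ^ α + T)) ≤
      (if ‖j‖ ≤ S then ENNReal.ofReal (1 / T) else 0) +
        ENNReal.ofReal (2 ^ α) * (if S ≤ ‖j‖ then ENNReal.ofReal (‖j‖ ^ (-α)) else 0) := by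
    have hmax : 0 ≤ max (‖j‖ - 1) 0 ^ α := Real.rpow_nonneg (le_max_right _ _) _
    split_ifs with hjS hSj hSj
    · exact le_add_right (ENNReal.ofReal_le_ofReal
        (one_div_le_one_div_of_le hT0 (by linarith)))
    · exact le_add_right (ENNReal.ofReal_le_ofReal
        (one_div_le_one_div_of_le hT0 (by linarith)))
    · have hj : 0 < ‖j‖ := by linarith
      refine le_add_left ?_
      rw [← ENNReal.ofReal_mul (by positivity)]
      apply ENNReal.ofReal_le_ofReal
      calc 1 / (max (‖j‖ - 1) 0 ^ α + T) ≤ 1 / (‖j‖ / 2) ^ α :=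
            one_div_le_one_div_of_le (by positivity)
              (div_two_rpow_le_max_sub_one_rpow_add hj.le hα hT)
        _ = 2 ^ α * ‖j‖ ^ (-α) := by
            rw [Real.div_rpow hj.le zero_le_two, Real.rpow_neg hj.le]
            field_simp
    · exact absurd (le_of_not_ge hjS) hSj
  calc ∑' j : Fin d → ℤ, ENNReal.ofReal (1 / (max (‖j‖ - 1) 0 ^ α + T))
      ≤ ∑' j : Fin d → ℤ, (if ‖j‖ ≤ S then ENNReal.ofReal (1 / T) else 0) +
          ENNReal.ofReal (2 ^ α) *
            ∑' j : Fin d → ℤ, (if S ≤ ‖j‖ then ENNReal.ofReal (‖j‖ ^ (-α)) else 0) := by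
        rw [← ENNReal.tsum_mul_left, ← ENNReal.tsum_add]
        exact ENNReal.tsum_le_tsum hsplit
    _ ≤ ENNReal.ofReal ((2 * S + 1) ^ d) * ENNReal.ofReal (1 / T) +
          ENNReal.ofReal (2 ^ α) * (C₀ * ENNReal.ofReal (S ^ ((d : ℝ) - α))) := by
        gcongr
        · exact tsum_ite_norm_le_le (by positivity) _
        · exact htail S hS
    _ ≤ (ENNReal.ofReal (3 ^ d) + ENNReal.ofReal (2 ^ α) * C₀) *
          ENNReal.ofReal (T ^ ((d : ℝ) / α - 1)) := by
        rw [← ENNReal.ofReal_mul (by positivity), hSdα, add_mul, mul_assoc,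
          ← ENNReal.ofReal_mul (by positivity)]
        gcongr

end LatticeSums

section Cubes

variable {d : ℕ}

lemma measurableSet_cube (j : Fin d → ℤ) : MeasurableSet (cube d j) := by
  have : cube d j = Set.univ.pi fun i => Set.Ico ((j i : ℝ) - 1 / 2) (j i + 1 / 2) := by
    ext y
    simp [cube, Set.mem_pi]
  rw [this]
  exact MeasurableSet.univ_pi fun _ => measurableSet_Ico

lemma mem_cube_floor_add_half (y : Fin d → ℝ) : y ∈ cube d fun i => ⌊y i + 1 / 2⌋ :=
  fun i => ⟨by linarith [Int.floor_le (y i + 1 / 2)],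
    by linarith [Int.lt_floor_add_one (y i + 1 / 2)]⟩

lemma abs_norm_sub_norm_le_of_mem_cube {j : Fin d → ℤ} {y : Fin d → ℝ} (hy : y ∈ cube d j) :
    |‖y‖ - ‖j‖| ≤ 1 / 2 := by
  have hcast : ‖fun i => (j i : ℝ)‖ = ‖j‖ := rfl
  have hdist : ‖y - fun i => (j i : ℝ)‖ ≤ 1 / 2 :=
    (pi_norm_le_iff_of_nonneg (by norm_num)).2 fun i => by
      rw [Pi.sub_apply, Real.norm_eq_abs, abs_le]
      constructor <;> linarith [hy i]
  exact hcast ▸ (abs_norm_sub_norm_le _ _).trans hdist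

lemma norm_sub_one_le_norm_sub_of_mem_cube {j : Fin d → ℤ} {x y : Fin d → ℝ}
    (hx : x ∈ cube d 0) (hy : y ∈ cube d j) : ‖j‖ - 1 ≤ ‖x - y‖ := by
  have hx' := abs_le.1 (abs_norm_sub_norm_le_of_mem_cube hx)
  have hy' := abs_le.1 (abs_norm_sub_norm_le_of_mem_cube hy)
  rw [norm_zero] at hx'
  linarith [norm_sub_norm_le y x, norm_sub_rev x y]

end Cubes

lemma setLIntegral_le_biSup_of_measure_le_one {X : Type*} [MeasurableSpace X] {ν : Measure X}
    {s : Set X} (hs : MeasurableSet s) (hνs : ν s ≤ 1) (g : X → ℝ≥0∞) :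
    ∫⁻ y in s, g y ∂ν ≤ ⨆ y ∈ s, g y :=
  calc ∫⁻ y in s, g y ∂ν ≤ ∫⁻ _ in s, (⨆ y ∈ s, g y) ∂ν :=
        setLIntegral_mono' hs fun y hy => le_iSup₂ (f := fun y _ => g y) y hy
    _ = (⨆ y ∈ s, g y) * ν s := setLIntegral_const _ _
    _ ≤ ⨆ y ∈ s, g y := mul_le_of_le_one_right' hνs

lemma setLIntegral_norm_snd_gt_le_VR {d₁ d₂ : ℕ} (f : (Fin d₁ → ℝ) × (Fin d₂ → ℝ) → ℝ)
    (R : ℝ) {ν : Measure ((Fin d₁ → ℝ) × (Fin d₂ → ℝ))} (hν : ∀ j, ν (cubeP d₁ d₂ j) ≤ 1)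
    (x : (Fin d₁ → ℝ) × (Fin d₂ → ℝ)) :
    ∫⁻ y in {y : (Fin d₁ → ℝ) × (Fin d₂ → ℝ) | R < ‖y.2‖}, ENNReal.ofReal (f (x - y)) ∂ν ≤
      VR d₁ d₂ f R x := by
  set T := {j : (Fin d₁ → ℤ) × (Fin d₂ → ℤ) | R - 1 < ‖j.2‖}
  have hcover : {y : (Fin d₁ → ℝ) × (Fin d₂ → ℝ) | R < ‖y.2‖} ⊆ ⋃ j : T, cubeP d₁ d₂ j := by
    intro y hy
    have hmem : y ∈ cubeP d₁ d₂ (fun i => ⌊y.1 i + 1 / 2⌋, fun i => ⌊y.2 i + 1 / 2⌋) :=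
      ⟨mem_cube_floor_add_half y.1, mem_cube_floor_add_half y.2⟩
    have hnorm := abs_le.1 (abs_norm_sub_norm_le_of_mem_cube hmem.2)
    exact Set.mem_iUnion.2 ⟨⟨_, show R - 1 < _ by linarith [Set.mem_ofPred.1 hy]⟩, hmem⟩
  calc ∫⁻ y in {y : (Fin d₁ → ℝ) × (Fin d₂ → ℝ) | R < ‖y.2‖}, ENNReal.ofReal (f (x - y)) ∂ν
      ≤ ∫⁻ y in ⋃ j : T, cubeP d₁ d₂ j, ENNReal.ofReal (f (x - y)) ∂ν :=
        lintegral_mono_set hcover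
    _ ≤ ∑' j : T, ∫⁻ y in cubeP d₁ d₂ j, ENNReal.ofReal (f (x - y)) ∂ν :=
        lintegral_iUnion_le _ _
    _ ≤ ∑' j : T, ⨆ y ∈ cubeP d₁ d₂ j, ENNReal.ofReal (f (x - y)) :=
        ENNReal.tsum_le_tsum fun j => setLIntegral_le_biSup_of_measure_le_one
          ((measurableSet_cube _).prod (measurableSet_cube _)) (hν j) _
    _ = VR d₁ d₂ f R x := by
        rw [tsum_subtype T fun j => ⨆ y ∈ cubeP d₁ d₂ j, ENNReal.ofReal (f (x - y)), VR]
        -- `Set.indicator` unfolds to the classical `if` in the definition of `VR`.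
        rfl

lemma sub_one_rpow_le {t e : ℝ} (ht : 2 ≤ t) (he : e ≤ 0) : (t - 1) ^ e ≤ 2 ^ (-e) * t ^ e :=
  calc (t - 1) ^ e ≤ (t / 2) ^ e := Real.rpow_le_rpow_of_nonpos (by positivity) (by linarith) he
    _ = 2 ^ (-e) * t ^ e := by
      rw [Real.div_rpow (by linarith) zero_le_two, Real.rpow_neg zero_le_two]
      ring

section UpperBound

variable {d₁ d₂ : ℕ} {f : (Fin d₁ → ℝ) × (Fin d₂ → ℝ) → ℝ} {α₁ α₂ f₀ r₀ : ℝ}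

lemma VR_le_tsum_tsum (hα₁ : 0 < α₁) (hα₂ : 0 < α₂) (hf₀ : 0 ≤ f₀)
    (h_upp : ∀ x : (Fin d₁ → ℝ) × (Fin d₂ → ℝ), r₀ ≤ max ‖x.1‖ ‖x.2‖ →
      f x ≤ f₀ / (‖x.1‖ ^ α₁ + ‖x.2‖ ^ α₂))
    {R : ℝ} (hRr₀ : r₀ + 2 ≤ R) (hR : 2 ≤ R) {x : (Fin d₁ → ℝ) × (Fin d₂ → ℝ)}
    (hx : x ∈ cubeP d₁ d₂ 0) :
    VR d₁ d₂ f R x ≤ ∑' (j₂ : Fin d₂ → ℤ) (j₁ : Fin d₁ → ℤ),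
      if R - 1 < ‖j₂‖ then
        ENNReal.ofReal (f₀ / (max (‖j₁‖ - 1) 0 ^ α₁ + (‖j₂‖ - 1) ^ α₂))
      else 0 := by
  rw [← ENNReal.tsum_comm, ← ENNReal.tsum_prod (f := fun j₁ j₂ => _), VR]
  refine ENNReal.tsum_le_tsum fun j => ?_
  split_ifs with hj
  · refine iSup₂_le fun y hy => ENNReal.ofReal_le_ofReal ?_
    have h₁ := norm_sub_one_le_norm_sub_of_mem_cube hx.1 hy.1
    have h₂ := norm_sub_one_le_norm_sub_of_mem_cube hx.2 hy.2
    have hpos : 0 < (‖j.2‖ - 1) ^ α₂ := Real.rpow_pos_of_pos (by linarith) _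
    refine (h_upp (x - y) (le_max_of_le_right (by simp only [Prod.snd_sub]; linarith))).trans ?_
    refine div_le_div_of_nonneg_left hf₀ (by positivity) (add_le_add ?_ ?_)
    · exact Real.rpow_le_rpow (le_max_right _ _) (max_le h₁ (norm_nonneg _)) hα₁.le
    · exact Real.rpow_le_rpow (by linarith) h₂ hα₂.le
  · exact le_rfl

theorem exists_VR_le_rpow (hα₁ : 0 < α₁) (hα₂ : 0 < α₂)
    (hγ : (d₁ : ℝ) / α₁ + (d₂ : ℝ) / α₂ < 1) (hf₀ : 0 ≤ f₀)
    (h_upp : ∀ x : (Fin d₁ → ℝ) × (Fin d₂ → ℝ), r₀ ≤ max ‖x.1‖ ‖x.2‖ →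
      f x ≤ f₀ / (‖x.1‖ ^ α₁ + ‖x.2‖ ^ α₂)) :
    ∃ c R₀ : ℝ, 0 < c ∧ 1 < R₀ ∧
      ∀ R : ℝ, R₀ ≤ R → ∀ x ∈ cubeP d₁ d₂ 0,
        VR d₁ d₂ f R x ≤
          ENNReal.ofReal (c * R ^ (-(α₂ * (1 - ((d₁ : ℝ) / α₁ + (d₂ : ℝ) / α₂))))) := by
  set β := α₂ * (1 - (d₁ : ℝ) / α₁) with hβ
  have hd₁ : (d₁ : ℝ) < α₁ :=
    (div_lt_one hα₁).1 (by linarith [div_nonneg d₂.cast_nonneg hα₂.le])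
  have hd₂ : (d₂ : ℝ) < β := by
    have : (d₂ : ℝ) / α₂ < 1 - (d₁ : ℝ) / α₁ := by linarith
    rwa [div_lt_iff₀' hα₂] at this
  have hexp : (d₂ : ℝ) - β = -(α₂ * (1 - ((d₁ : ℝ) / α₁ + (d₂ : ℝ) / α₂))) := by
    rw [hβ]
    field_simp
    ring
  obtain ⟨C₁, hC₁, hinner⟩ := exists_tsum_inv_max_sub_one_rpow_add_le hd₁
  obtain ⟨C₂, hC₂, htail⟩ := exists_tsum_norm_rpow_neg_tail_le hd₂
  set K := ENNReal.ofReal f₀ * C₁ * ENNReal.ofReal (2 ^ β)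
  set C := K * C₂ * ENNReal.ofReal (2 ^ (β - d₂))
  have hC : C ≠ ∞ := by finiteness
  refine ⟨C.toReal + 1, max (r₀ + 2) 3, by positivity, by linarith [le_max_right (r₀ + 2) 3],
    fun R hR x hx => ?_⟩
  have hR₃ : 3 ≤ R := le_of_max_le_right hR
  have hslice (j₂ : Fin d₂ → ℤ) :
      ∑' j₁ : Fin d₁ → ℤ, (if R - 1 < ‖j₂‖ then
        ENNReal.ofReal (f₀ / (max (‖j₁‖ - 1) 0 ^ α₁ + (‖j₂‖ - 1) ^ α₂)) else 0) ≤
      K * if R - 1 ≤ ‖j₂‖ then ENNReal.ofReal (‖j₂‖ ^ (-β)) else 0 := by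
    split_ifs with hj hj'
    · have hT : 1 ≤ (‖j₂‖ - 1) ^ α₂ := Real.one_le_rpow (by linarith) hα₂.le
      have hpow : ((‖j₂‖ - 1) ^ α₂) ^ ((d₁ : ℝ) / α₁ - 1) = (‖j₂‖ - 1) ^ (-β) := by
        rw [← Real.rpow_mul (by linarith), hβ]
        ring_nf
      calc ∑' j₁ : Fin d₁ → ℤ, ENNReal.ofReal (f₀ / (max (‖j₁‖ - 1) 0 ^ α₁ + (‖j₂‖ - 1) ^ α₂))
          = ENNReal.ofReal f₀ * ∑' j₁ : Fin d₁ → ℤ,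
              ENNReal.ofReal (1 / (max (‖j₁‖ - 1) 0 ^ α₁ + (‖j₂‖ - 1) ^ α₂)) := by
            rw [← ENNReal.tsum_mul_left]
            simp only [← ENNReal.ofReal_mul hf₀, mul_one_div]
        _ ≤ ENNReal.ofReal f₀ * (C₁ * ENNReal.ofReal ((‖j₂‖ - 1) ^ (-β))) := by
            rw [← hpow]
            gcongr
            exact hinner _ hT
        _ ≤ ENNReal.ofReal f₀ * (C₁ * ENNReal.ofReal (2 ^ β * ‖j₂‖ ^ (-β))) := by
            gcongr
            simpa using sub_one_rpow_le (by linarith) (neg_nonpos.2 (by linarith : 0 ≤ β))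
        _ = K * ENNReal.ofReal (‖j₂‖ ^ (-β)) := by
            rw [ENNReal.ofReal_mul (by positivity)]
            ring
    · exact absurd hj.le hj'
    · simp
    · simp
  calc VR d₁ d₂ f R x
      ≤ ∑' (j₂ : Fin d₂ → ℤ) (j₁ : Fin d₁ → ℤ), if R - 1 < ‖j₂‖ then
          ENNReal.ofReal (f₀ / (max (‖j₁‖ - 1) 0 ^ α₁ + (‖j₂‖ - 1) ^ α₂)) else 0 :=
        VR_le_tsum_tsum hα₁ hα₂ hf₀ h_upp (le_of_max_le_left hR) (by linarith) hx
    _ ≤ K * ∑' j₂ : Fin d₂ → ℤ, if R - 1 ≤ ‖j₂‖ then ENNReal.ofReal (‖j₂‖ ^ (-β)) else 0 := by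
        rw [← ENNReal.tsum_mul_left]
        exact ENNReal.tsum_le_tsum hslice
    _ ≤ K * (C₂ * ENNReal.ofReal ((R - 1) ^ ((d₂ : ℝ) - β))) := by
        gcongr
        exact htail _ (by linarith)
    _ ≤ K * (C₂ * ENNReal.ofReal (2 ^ (β - d₂) * R ^ ((d₂ : ℝ) - β))) := by
        gcongr
        simpa using sub_one_rpow_le (by linarith) (by linarith : (d₂ : ℝ) - β ≤ 0)
    _ = C * ENNReal.ofReal (R ^ ((d₂ : ℝ) - β)) := by
        rw [ENNReal.ofReal_mul (by positivity)]
        ring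
    _ ≤ ENNReal.ofReal ((C.toReal + 1) * R ^ ((d₂ : ℝ) - β)) := by
        rw [ENNReal.ofReal_mul (by positivity)]
        gcongr
        exact (ENNReal.le_ofReal_iff_toReal_le hC (by positivity)).2 (by linarith)
    _ = _ := by rw [hexp]

end UpperBound

theorem statement8_general (d₁ d₂ : ℕ)
    (f : (Fin d₁ → ℝ) × (Fin d₂ → ℝ) → ℝ)
    (α₁ α₂ : ℝ) (hα₁ : 0 < α₁) (hα₂ : 0 < α₂)
    (hγ : (d₁ : ℝ) / α₁ + (d₂ : ℝ) / α₂ < 1)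
    (f₀ r₀ : ℝ) (hf₀ : 0 < f₀)
    (h_upp : ∀ x : (Fin d₁ → ℝ) × (Fin d₂ → ℝ), r₀ ≤ max ‖x.1‖ ‖x.2‖ →
      f x ≤ f₀ / (‖x.1‖ ^ α₁ + ‖x.2‖ ^ α₂)) :
    (∀ R : ℝ, 1 < R →
      ∀ ν : Measure ((Fin d₁ → ℝ) × (Fin d₂ → ℝ)),
        (∀ j, ν (cubeP d₁ d₂ j) ≤ 1) →
        ∀ x : (Fin d₁ → ℝ) × (Fin d₂ → ℝ),
          (∫⁻ y in {y : (Fin d₁ → ℝ) × (Fin d₂ → ℝ) | R < ‖y.2‖},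
              ENNReal.ofReal (f (x - y)) ∂ν) ≤ VR d₁ d₂ f R x) ∧
    (∃ c R₀ : ℝ, 0 < c ∧ 1 < R₀ ∧
      ∀ R : ℝ, R₀ ≤ R → ∀ x ∈ cubeP d₁ d₂ 0,
        VR d₁ d₂ f R x ≤
          ENNReal.ofReal (c *
            R ^ (-(α₂ * (1 - ((d₁ : ℝ) / α₁ + (d₂ : ℝ) / α₂)))))) :=
  ⟨fun R _ _ hν x => setLIntegral_norm_snd_gt_le_VR f R hν x,
    exists_VR_le_rpow hα₁ hα₂ hγ hf₀.le h_upp⟩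

/-- (i) for every Borel measure `ν` with `ν(Λ_j) ≤ 1` for all `j` and
every `x`, `∫_{|y₂| > R} f(x-y) ν(dy) ≤ V_R(x)`; (ii) there are `c > 0`, `R₀ > 1` with
`sup_{x ∈ Λ₀} V_R(x) ≤ c · R^{-α₂(1-γ)}` for all `R ≥ R₀`. -/
theorem statement8 (d₁ d₂ : ℕ) (hd₁ : 0 < d₁) (hd₂ : 0 < d₂)
    (f : (Fin d₁ → ℝ) × (Fin d₂ → ℝ) → ℝ)
    (hf_meas : Measurable f) (hf_nonneg : ∀ x, 0 ≤ f x)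
    (α₁ α₂ : ℝ) (hα₁ : 0 < α₁) (hα₂ : 0 < α₂)
    (hγ : (d₁ : ℝ) / α₁ + (d₂ : ℝ) / α₂ < 1)
    (f_u f₀ r₀ : ℝ) (hfu : 0 < f_u) (hf₀ : 0 < f₀) (hr₀ : 0 < r₀)
    (h_low : ∀ x : (Fin d₁ → ℝ) × (Fin d₂ → ℝ), r₀ ≤ max ‖x.1‖ ‖x.2‖ →
      ENNReal.ofReal (f_u / (‖x.1‖ ^ α₁ + ‖x.2‖ ^ α₂)) ≤
        ∫⁻ y in cubeP d₁ d₂ 0, ENNReal.ofReal (f (y - x)))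
    (h_upp : ∀ x : (Fin d₁ → ℝ) × (Fin d₂ → ℝ), r₀ ≤ max ‖x.1‖ ‖x.2‖ →
      f x ≤ f₀ / (‖x.1‖ ^ α₁ + ‖x.2‖ ^ α₂)) :
    (∀ R : ℝ, 1 < R →
      ∀ ν : Measure ((Fin d₁ → ℝ) × (Fin d₂ → ℝ)),
        (∀ j, ν (cubeP d₁ d₂ j) ≤ 1) →
        ∀ x : (Fin d₁ → ℝ) × (Fin d₂ → ℝ),
          (∫⁻ y in {y : (Fin d₁ → ℝ) × (Fin d₂ → ℝ) | R < ‖y.2‖},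
              ENNReal.ofReal (f (x - y)) ∂ν) ≤ VR d₁ d₂ f R x) ∧
    (∃ c R₀ : ℝ, 0 < c ∧ 1 < R₀ ∧
      ∀ R : ℝ, R₀ ≤ R → ∀ x ∈ cubeP d₁ d₂ 0,
        VR d₁ d₂ f R x ≤
          ENNReal.ofReal (c *
            R ^ (-(α₂ * (1 - ((d₁ : ℝ) / α₁ + (d₂ : ℝ) / α₂)))))) :=
  statement8_general d₁ d₂ f α₁ α₂ hα₁ hα₂ hγ f₀ r₀ hf₀ h_upp
end
end

section
/- Set β_k := max{1, 2/(α_k(1−γ))} for k = 1,2. For L > 1 let Λ̃ := ⋃_{j=(j₁,j₂)∈ℤ^d, |j₁| ≤ 2L^{β₁} and |j₂| ≤ 2L^{β₂}} Λ_j. Then there exist C > 0 and L₀ > 1 such that for all L ≥ L₀ one has sup_{y∈ℝ^d, |y| ≤ L/2} ∫_{ℝ^d ∖ Λ̃} f(x − y) dx ≤ C · L^{−2}. -/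
open MeasureTheory ENNReal

noncomputable section

/-!
A point outside `Λ̃` lies in a cube `Λ_j` with `|j₁| > 2L^{β₁}` or `|j₂| > 2L^{β₂}`, so after the
shift by `|y| ≤ L/2` it satisfies `|u₁| ≥ L^{β₁}` or `|u₂| ≥ L^{β₂}`; there `f` is bounded by
`f₀ w(u)` with `w(u) = 1/(|u₁|^{α₁} + |u₂|^{α₂})`. Integrating `w` by Fubini, the scaling
`u₂ = |u₁|^{α₁/α₂} v` gives the fibre integral `|u₁|^{-α₁(1-γ₂)} ∫ 1/(1+|v|^{α₂})`, and the scaling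
`u₁ = R v` gives `∫_{|u₁| ≥ R} |u₁|^{-α₁(1-γ₂)} = R^{-α₁(1-γ)} ∫_{|v| ≥ 1} |v|^{-α₁(1-γ₂)}`.
Both constants are finite because `γ < 1` forces `d₂ < α₂` and `d₁ < α₁(1-γ₂)`, and the choice of
`β_k` makes `(L^{β_k})^{-α_k(1-γ)} ≤ L^{-2}`.
-/

open Set Module

lemma one_add_rpow_le_two_rpow_mul {t α : ℝ} (ht : 0 ≤ t) (hα : 0 ≤ α) :
    (1 + t) ^ α ≤ 2 ^ α * (1 + t ^ α) := calc
  (1 + t) ^ α ≤ (2 * max 1 t) ^ α := by gcongr; rw [two_mul]; gcongr <;> simp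
  _ = 2 ^ α * max 1 (t ^ α) := by
    rw [Real.mul_rpow zero_le_two (by positivity), Real.rpow_max zero_le_one ht hα, Real.one_rpow]
  _ ≤ 2 ^ α * (1 + t ^ α) := by gcongr; exact max_le_add_of_nonneg zero_le_one (by positivity)

section Scaling

variable {E : Type*} [NormedAddCommGroup E] [NormedSpace ℝ E] [FiniteDimensional ℝ E]
  [MeasurableSpace E] [BorelSpace E] (μ : Measure E) [μ.IsAddHaarMeasure]

theorem lintegral_eq_ofReal_rpow_mul_lintegral_comp_smul (g : E → ℝ≥0∞) {r : ℝ} (hr : 0 < r) :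
    ∫⁻ x, g x ∂μ = ENNReal.ofReal (r ^ finrank ℝ E) * ∫⁻ x, g (r • x) ∂μ := by
  have hmap := lintegral_map_equiv g (MeasurableEquiv.smul₀ r hr.ne') (μ := μ)
  rw [MeasurableEquiv.coe_smul₀] at hmap
  rw [← hmap, Measure.map_addHaar_smul μ hr.ne', lintegral_smul_measure, smul_eq_mul, ← mul_assoc,
    ← ENNReal.ofReal_mul (by positivity), abs_of_pos (by positivity),
    mul_inv_cancel₀ (by positivity), ENNReal.ofReal_one, one_mul]

theorem lintegral_one_div_add_rpow_norm {α a : ℝ} (hα : 0 < α) (ha : 0 < a) :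
    ∫⁻ v, ENNReal.ofReal (1 / (a + ‖v‖ ^ α)) ∂μ =
      ENNReal.ofReal (a ^ (finrank ℝ E / α - 1)) * ∫⁻ v, ENNReal.ofReal (1 / (1 + ‖v‖ ^ α)) ∂μ := by
  set r := a ^ α⁻¹
  have hr : 0 < r := by positivity
  have hra : r ^ α = a := Real.rpow_inv_rpow ha.le hα.ne'
  have hscale (w : E) : ENNReal.ofReal (1 / (a + ‖r • w‖ ^ α)) =
      ENNReal.ofReal a⁻¹ * ENNReal.ofReal (1 / (1 + ‖w‖ ^ α)) := by
    rw [norm_smul, Real.norm_of_nonneg hr.le, Real.mul_rpow hr.le (norm_nonneg w), hra,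
      ← ENNReal.ofReal_mul (by positivity)]
    congr 1
    field_simp
  rw [lintegral_eq_ofReal_rpow_mul_lintegral_comp_smul μ _ hr]
  simp_rw [hscale]
  rw [lintegral_const_mul _ (by fun_prop), ← mul_assoc, ← ENNReal.ofReal_mul (by positivity)]
  congr 2
  rw [Real.rpow_sub ha, Real.rpow_one, ← Real.rpow_natCast, ← Real.rpow_mul ha.le,
    inv_mul_eq_div, div_eq_mul_inv _ a]

theorem setLIntegral_rpow_neg_norm_tail {s R : ℝ} (hR : 0 < R) :
    ∫⁻ u in {u : E | R ≤ ‖u‖}, ENNReal.ofReal (‖u‖ ^ (-s)) ∂μ =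
      ENNReal.ofReal (R ^ (finrank ℝ E - s)) *
        ∫⁻ u in {u : E | 1 ≤ ‖u‖}, ENNReal.ofReal (‖u‖ ^ (-s)) ∂μ := by
  have hmeas (c : ℝ) : MeasurableSet {u : E | c ≤ ‖u‖} :=
    measurableSet_le measurable_const measurable_norm
  have hscale (w : E) :
      {u : E | R ≤ ‖u‖}.indicator (fun u ↦ ENNReal.ofReal (‖u‖ ^ (-s))) (R • w) =
        ENNReal.ofReal (R ^ (-s)) *
          {u : E | 1 ≤ ‖u‖}.indicator (fun u ↦ ENNReal.ofReal (‖u‖ ^ (-s))) w := by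
    have hnorm : ‖R • w‖ = R * ‖w‖ := by rw [norm_smul, Real.norm_of_nonneg hR.le]
    by_cases hw : 1 ≤ ‖w‖
    · rw [indicator_of_mem (by simp only [mem_ofPred_eq, hnorm]; nlinarith),
        indicator_of_mem (show w ∈ {u : E | 1 ≤ ‖u‖} from hw), hnorm,
        Real.mul_rpow hR.le (norm_nonneg w), ENNReal.ofReal_mul (by positivity)]
    · rw [indicator_of_notMem (by simp only [mem_ofPred_eq, hnorm, not_le]; nlinarith),
        indicator_of_notMem (show w ∉ {u : E | 1 ≤ ‖u‖} from hw), mul_zero]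
  rw [← lintegral_indicator (hmeas R), ← lintegral_indicator (hmeas 1),
    lintegral_eq_ofReal_rpow_mul_lintegral_comp_smul μ _ hR]
  simp_rw [hscale]
  rw [lintegral_const_mul _ ((by fun_prop : Measurable _).indicator (hmeas 1)), ← mul_assoc,
    ← ENNReal.ofReal_mul (by positivity), ← Real.rpow_natCast, ← Real.rpow_add hR, sub_eq_add_neg]

theorem lintegral_one_div_one_add_rpow_norm_lt_top {α : ℝ} (hα : finrank ℝ E < α) :
    ∫⁻ v, ENNReal.ofReal (1 / (1 + ‖v‖ ^ α)) ∂μ < ∞ := by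
  have hα0 : 0 < α := (Nat.cast_nonneg _).trans_lt hα
  calc ∫⁻ v, ENNReal.ofReal (1 / (1 + ‖v‖ ^ α)) ∂μ
      ≤ ∫⁻ v, ENNReal.ofReal (2 ^ α) * ENNReal.ofReal ((1 + ‖v‖) ^ (-α)) ∂μ := by
        refine lintegral_mono fun v ↦ ?_
        rw [← ENNReal.ofReal_mul (by positivity)]
        refine ENNReal.ofReal_le_ofReal ?_
        rw [Real.rpow_neg (by positivity), ← div_eq_mul_inv,
          div_le_div_iff₀ (by positivity) (by positivity), one_mul]
        exact one_add_rpow_le_two_rpow_mul (norm_nonneg v) hα0.le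
    _ < ∞ := by
      rw [lintegral_const_mul _ (by fun_prop)]
      exact mul_lt_top ofReal_lt_top (finite_integral_one_add_norm hα)

theorem setLIntegral_rpow_neg_norm_one_le_lt_top {s : ℝ} (hs : finrank ℝ E < s) :
    ∫⁻ u in {u : E | 1 ≤ ‖u‖}, ENNReal.ofReal (‖u‖ ^ (-s)) ∂μ < ∞ := by
  have hs0 : 0 < s := (Nat.cast_nonneg _).trans_lt hs
  calc ∫⁻ u in {u : E | 1 ≤ ‖u‖}, ENNReal.ofReal (‖u‖ ^ (-s)) ∂μ
      ≤ ∫⁻ u in {u : E | 1 ≤ ‖u‖}, ENNReal.ofReal 2 * ENNReal.ofReal (1 / (1 + ‖u‖ ^ s)) ∂μ := by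
        refine setLIntegral_mono (by fun_prop) fun u (hu : 1 ≤ ‖u‖) ↦ ?_
        have hus : 1 ≤ ‖u‖ ^ s := Real.one_le_rpow hu hs0.le
        rw [← ENNReal.ofReal_mul zero_le_two]
        refine ENNReal.ofReal_le_ofReal ?_
        rw [Real.rpow_neg (norm_nonneg u), mul_one_div, inv_eq_one_div,
          div_le_div_iff₀ (by positivity) (by positivity)]
        linarith
    _ ≤ ∫⁻ u, ENNReal.ofReal 2 * ENNReal.ofReal (1 / (1 + ‖u‖ ^ s)) ∂μ :=
        setLIntegral_le_lintegral _ _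
    _ < ∞ := by
      rw [lintegral_const_mul _ (by fun_prop)]
      exact mul_lt_top ofReal_lt_top (lintegral_one_div_one_add_rpow_norm_lt_top μ hs)

end Scaling

lemma rpow_rpow_neg_le_inv_sq {L β e : ℝ} (hL : 1 ≤ L) (h : 2 ≤ β * e) :
    (L ^ β) ^ (-e) ≤ (L ^ 2)⁻¹ := by
  rw [← Real.rpow_mul (by linarith), ← Real.rpow_two, ← Real.rpow_neg (by linarith)]
  exact Real.rpow_le_rpow_of_exponent_le hL (by linarith)

section Anisotropic

variable {E₁ E₂ : Type*} [NormedAddCommGroup E₁] [NormedSpace ℝ E₁] [FiniteDimensional ℝ E₁]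
  [MeasurableSpace E₁] [BorelSpace E₁] (μ₁ : Measure E₁) [μ₁.IsAddHaarMeasure]
  [NormedAddCommGroup E₂] [NormedSpace ℝ E₂] [FiniteDimensional ℝ E₂]
  [MeasurableSpace E₂] [BorelSpace E₂] (μ₂ : Measure E₂) [μ₂.IsAddHaarMeasure]

theorem setLIntegral_norm_fst_ge_eq_mul {α₁ α₂ R : ℝ} (hα₂ : 0 < α₂) (hR : 0 < R) :
    ∫⁻ u in {u : E₁ × E₂ | R ≤ ‖u.1‖}, ENNReal.ofReal (1 / (‖u.1‖ ^ α₁ + ‖u.2‖ ^ α₂))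
        ∂μ₁.prod μ₂ =
      (∫⁻ u in {u : E₁ | R ≤ ‖u‖}, ENNReal.ofReal (‖u‖ ^ (-(α₁ * (1 - finrank ℝ E₂ / α₂)))) ∂μ₁) *
        ∫⁻ v, ENNReal.ofReal (1 / (1 + ‖v‖ ^ α₂)) ∂μ₂ := by
  have hS : MeasurableSet {u : E₁ | R ≤ ‖u‖} := measurableSet_le measurable_const measurable_norm
  have hfiber : ∀ u ∈ {u : E₁ | R ≤ ‖u‖},
      ∫⁻ v, ENNReal.ofReal (1 / (‖u‖ ^ α₁ + ‖v‖ ^ α₂)) ∂μ₂ =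
        ENNReal.ofReal (‖u‖ ^ (-(α₁ * (1 - finrank ℝ E₂ / α₂)))) *
          ∫⁻ v, ENNReal.ofReal (1 / (1 + ‖v‖ ^ α₂)) ∂μ₂ := fun u (hu : R ≤ ‖u‖) ↦ by
    have hu0 : 0 < ‖u‖ := hR.trans_le hu
    rw [lintegral_one_div_add_rpow_norm μ₂ hα₂ (by positivity), ← Real.rpow_mul hu0.le]
    congr 3
    ring
  rw [show {u : E₁ × E₂ | R ≤ ‖u.1‖} = {u : E₁ | R ≤ ‖u‖} ×ˢ univ by ext; simp,
    ← Measure.prod_restrict, Measure.restrict_univ, lintegral_prod _ (by fun_prop),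
    setLIntegral_congr_fun hS hfiber, lintegral_mul_const _ (by fun_prop)]

theorem exists_setLIntegral_norm_fst_ge_eq {α₁ α₂ : ℝ} (hα₁ : 0 < α₁) (hα₂ : 0 < α₂)
    (hγ : finrank ℝ E₁ / α₁ + finrank ℝ E₂ / α₂ < 1) :
    ∃ M < ∞, ∀ R : ℝ, 0 < R →
      ∫⁻ u in {u : E₁ × E₂ | R ≤ ‖u.1‖}, ENNReal.ofReal (1 / (‖u.1‖ ^ α₁ + ‖u.2‖ ^ α₂))
          ∂μ₁.prod μ₂ =
        M * ENNReal.ofReal (R ^ (-(α₁ * (1 - (finrank ℝ E₁ / α₁ + finrank ℝ E₂ / α₂))))) := by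
  have hd₂ : (finrank ℝ E₂ : ℝ) < α₂ := by
    have : (finrank ℝ E₁ : ℝ) / α₁ ≥ 0 := by positivity
    rw [← div_lt_one hα₂]; linarith
  have hd₁ : (finrank ℝ E₁ : ℝ) < α₁ * (1 - finrank ℝ E₂ / α₂) := by
    rw [← div_lt_iff₀' hα₁]; linarith
  refine ⟨_, mul_lt_top (setLIntegral_rpow_neg_norm_one_le_lt_top μ₁ hd₁)
    (lintegral_one_div_one_add_rpow_norm_lt_top μ₂ hd₂), fun R hR ↦ ?_⟩
  rw [setLIntegral_norm_fst_ge_eq_mul μ₁ μ₂ hα₂ hR, setLIntegral_rpow_neg_norm_tail μ₁ hR,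
    mul_assoc, mul_comm]
  congr 3
  field_simp
  ring

theorem exists_setLIntegral_norm_snd_ge_eq {α₁ α₂ : ℝ} (hα₁ : 0 < α₁) (hα₂ : 0 < α₂)
    (hγ : finrank ℝ E₁ / α₁ + finrank ℝ E₂ / α₂ < 1) :
    ∃ M < ∞, ∀ R : ℝ, 0 < R →
      ∫⁻ u in {u : E₁ × E₂ | R ≤ ‖u.2‖}, ENNReal.ofReal (1 / (‖u.1‖ ^ α₁ + ‖u.2‖ ^ α₂))
          ∂μ₁.prod μ₂ =
        M * ENNReal.ofReal (R ^ (-(α₂ * (1 - (finrank ℝ E₁ / α₁ + finrank ℝ E₂ / α₂))))) := by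
  obtain ⟨M, hM, h⟩ := exists_setLIntegral_norm_fst_ge_eq μ₂ μ₁ hα₂ hα₁ (by rwa [add_comm])
  refine ⟨M, hM, fun R hR ↦ ?_⟩
  have hswap := (Measure.measurePreserving_swap (μ := μ₂) (ν := μ₁)).setLIntegral_comp_preimage_emb
    MeasurableEquiv.prodComm.measurableEmbedding
    (fun u : E₁ × E₂ ↦ ENNReal.ofReal (1 / (‖u.1‖ ^ α₁ + ‖u.2‖ ^ α₂))) {u | R ≤ ‖u.2‖}
  rw [← hswap, add_comm (finrank ℝ E₁ / α₁ : ℝ), ← h R hR]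
  simp only [Prod.fst_swap, Prod.snd_swap, add_comm (‖_‖ ^ α₁)]
  rfl

theorem exists_setLIntegral_norm_ge_union_le {α₁ α₂ : ℝ} (hα₁ : 0 < α₁) (hα₂ : 0 < α₂)
    (hγ : finrank ℝ E₁ / α₁ + finrank ℝ E₂ / α₂ < 1) :
    ∃ M : ℝ, 0 < M ∧ ∀ ⦃L β₁ β₂ : ℝ⦄, 1 ≤ L →
      2 ≤ β₁ * (α₁ * (1 - (finrank ℝ E₁ / α₁ + finrank ℝ E₂ / α₂))) →
      2 ≤ β₂ * (α₂ * (1 - (finrank ℝ E₁ / α₁ + finrank ℝ E₂ / α₂))) →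
      ∫⁻ u in {u : E₁ × E₂ | L ^ β₁ ≤ ‖u.1‖} ∪ {u | L ^ β₂ ≤ ‖u.2‖},
          ENNReal.ofReal (1 / (‖u.1‖ ^ α₁ + ‖u.2‖ ^ α₂)) ∂μ₁.prod μ₂ ≤
        ENNReal.ofReal (M / L ^ 2) := by
  obtain ⟨M₁, hM₁, h₁⟩ := exists_setLIntegral_norm_fst_ge_eq μ₁ μ₂ hα₁ hα₂ hγ
  obtain ⟨M₂, hM₂, h₂⟩ := exists_setLIntegral_norm_snd_ge_eq μ₁ μ₂ hα₁ hα₂ hγ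
  have hM : M₁ + M₂ ≤ ENNReal.ofReal ((M₁ + M₂).toReal + 1) :=
    (le_ofReal_iff_toReal_le (add_lt_top.2 ⟨hM₁, hM₂⟩).ne (by positivity)).2 (by linarith)
  refine ⟨(M₁ + M₂).toReal + 1, by positivity, fun L β₁ β₂ hL hβ₁ hβ₂ ↦ ?_⟩
  have hL0 : 0 < L := zero_lt_one.trans_le hL
  calc _ ≤ _ := lintegral_union_le _ _ _
    _ ≤ M₁ * ENNReal.ofReal (L ^ 2)⁻¹ + M₂ * ENNReal.ofReal (L ^ 2)⁻¹ := by
      rw [h₁ _ (by positivity), h₂ _ (by positivity)]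
      gcongr <;> exact rpow_rpow_neg_le_inv_sq hL ‹_›
    _ ≤ ENNReal.ofReal ((M₁ + M₂).toReal + 1) * ENNReal.ofReal (L ^ 2)⁻¹ := by
      rw [← add_mul]; gcongr
    _ = _ := by rw [← ENNReal.ofReal_mul (by positivity), div_eq_mul_inv]

end Anisotropic

lemma mem_cube_round {d : ℕ} (x : Fin d → ℝ) : x ∈ cube d (fun i ↦ round (x i)) := fun i ↦ by
  simp only [round_eq]
  constructor
  · linarith [Int.floor_le (x i + 1 / 2)]
  · linarith [Int.lt_floor_add_one (x i + 1 / 2)]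

lemma norm_round_le {d : ℕ} (x : Fin d → ℝ) : ‖fun i ↦ round (x i)‖ ≤ ‖x‖ + 1 / 2 := by
  refine (pi_norm_le_iff_of_nonneg (by positivity)).2 fun i ↦ ?_
  rw [Int.norm_eq_abs]
  have h₁ := abs_sub_abs_le_abs_sub (round (x i) : ℝ) (x i)
  have h₂ := abs_sub_round (x i)
  have h₃ := norm_le_pi_norm x i
  rw [abs_sub_comm] at h₁
  rw [Real.norm_eq_abs] at h₃
  linarith

lemma compl_iUnion_cubeP_subset {d₁ d₂ : ℕ} (R₁ R₂ : ℝ) :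
    (⋃ j ∈ {j : (Fin d₁ → ℤ) × (Fin d₂ → ℤ) | ‖j.1‖ ≤ 2 * R₁ ∧ ‖j.2‖ ≤ 2 * R₂}, cubeP d₁ d₂ j)ᶜ ⊆
      {x | 2 * R₁ - 1 / 2 < ‖x.1‖} ∪ {x | 2 * R₂ - 1 / 2 < ‖x.2‖} := by
  intro x hx
  have hj : ¬(‖fun i ↦ round (x.1 i)‖ ≤ 2 * R₁ ∧ ‖fun i ↦ round (x.2 i)‖ ≤ 2 * R₂) := fun hj ↦
    hx (mem_biUnion (x := (fun i ↦ round (x.1 i), fun i ↦ round (x.2 i))) hj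
      ⟨mem_cube_round x.1, mem_cube_round x.2⟩)
  rw [not_and_or, not_le, not_le] at hj
  rcases hj with h | h
  · exact .inl (by have := norm_round_le x.1; simp only [mem_ofPred_eq]; linarith)
  · exact .inr (by have := norm_round_le x.2; simp only [mem_ofPred_eq]; linarith)

lemma setLIntegral_compl_iUnion_cubeP_sub_le {d₁ d₂ : ℕ} {L R₁ R₂ : ℝ} (hR₁ : L + 1 ≤ 2 * R₁)
    (hR₂ : L + 1 ≤ 2 * R₂) (g : (Fin d₁ → ℝ) × (Fin d₂ → ℝ) → ℝ≥0∞)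
    {y : (Fin d₁ → ℝ) × (Fin d₂ → ℝ)} (hy : ‖y‖ ≤ L / 2) :
    ∫⁻ x in (⋃ j ∈ {j : (Fin d₁ → ℤ) × (Fin d₂ → ℤ) | ‖j.1‖ ≤ 2 * R₁ ∧ ‖j.2‖ ≤ 2 * R₂},
        cubeP d₁ d₂ j)ᶜ, g (x - y) ≤
      ∫⁻ u in {u | R₁ ≤ ‖u.1‖} ∪ {u | R₂ ≤ ‖u.2‖}, g u := by
  have hsub : (⋃ j ∈ {j : (Fin d₁ → ℤ) × (Fin d₂ → ℤ) | ‖j.1‖ ≤ 2 * R₁ ∧ ‖j.2‖ ≤ 2 * R₂},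
      cubeP d₁ d₂ j)ᶜ ⊆ (· - y) ⁻¹' ({u | R₁ ≤ ‖u.1‖} ∪ {u | R₂ ≤ ‖u.2‖}) := by
    refine (compl_iUnion_cubeP_subset R₁ R₂).trans ?_
    rintro x (hx | hx)
    · have := norm_sub_norm_le x.1 y.1
      have := (norm_fst_le y).trans hy
      exact .inl (show R₁ ≤ ‖x.1 - y.1‖ by simp only [mem_ofPred_eq] at hx; linarith)
    · have := norm_sub_norm_le x.2 y.2
      have := (norm_snd_le y).trans hy
      exact .inr (show R₂ ≤ ‖x.2 - y.2‖ by simp only [mem_ofPred_eq] at hx; linarith)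
  calc _ ≤ ∫⁻ x in (· - y) ⁻¹' ({u | R₁ ≤ ‖u.1‖} ∪ {u | R₂ ≤ ‖u.2‖}), g (x - y) :=
        lintegral_mono_set hsub
    _ = _ := by
      rw [Measure.volume_eq_prod]
      exact (measurePreserving_sub_right _ y).setLIntegral_comp_preimage_emb
        (MeasurableEquiv.subRight y).measurableEmbedding g _

lemma setLIntegral_ofReal_le_ofReal_mul {X : Type*} [MeasurableSpace X] {μ : Measure X}
    {s : Set X} {f w : X → ℝ} {c : ℝ} (hc : 0 ≤ c) (hw : Measurable w)
    (h : ∀ x ∈ s, f x ≤ c * w x) :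
    ∫⁻ x in s, ENNReal.ofReal (f x) ∂μ ≤ ENNReal.ofReal c * ∫⁻ x in s, ENNReal.ofReal (w x) ∂μ := by
  rw [← lintegral_const_mul _ (by fun_prop)]
  refine setLIntegral_mono (by fun_prop) fun x hx ↦ ?_
  rw [← ENNReal.ofReal_mul hc]
  exact ENNReal.ofReal_le_ofReal (h x hx)

lemma two_le_max_one_two_div_mul {e : ℝ} (he : 0 < e) : 2 ≤ max 1 (2 / e) * e :=
  calc 2 = 2 / e * e := (div_mul_cancel₀ 2 he.ne').symm
    _ ≤ max 1 (2 / e) * e := by gcongr; exact le_max_right _ _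

theorem statement14_general (d₁ d₂ : ℕ)
    (f : (Fin d₁ → ℝ) × (Fin d₂ → ℝ) → ℝ)
    (α₁ α₂ : ℝ) (hα₁ : 0 < α₁) (hα₂ : 0 < α₂)
    (hγ : (d₁ : ℝ) / α₁ + (d₂ : ℝ) / α₂ < 1)
    (f₀ r₀ : ℝ) (hf₀ : 0 < f₀)
    (h_upp : ∀ x : (Fin d₁ → ℝ) × (Fin d₂ → ℝ), r₀ ≤ max ‖x.1‖ ‖x.2‖ →
      f x ≤ f₀ / (‖x.1‖ ^ α₁ + ‖x.2‖ ^ α₂))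
    (β₁ β₂ : ℝ)
    (hβ₁ : β₁ = max 1 (2 / (α₁ * (1 - ((d₁ : ℝ) / α₁ + (d₂ : ℝ) / α₂)))))
    (hβ₂ : β₂ = max 1 (2 / (α₂ * (1 - ((d₁ : ℝ) / α₁ + (d₂ : ℝ) / α₂))))) :
    ∃ C L₀ : ℝ, 0 < C ∧ 1 < L₀ ∧
      ∀ L : ℝ, L₀ ≤ L →
      ∀ y : (Fin d₁ → ℝ) × (Fin d₂ → ℝ), ‖y‖ ≤ L / 2 →
        (∫⁻ x in (⋃ j ∈ {j : (Fin d₁ → ℤ) × (Fin d₂ → ℤ) |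
              ‖j.1‖ ≤ 2 * L ^ β₁ ∧ ‖j.2‖ ≤ 2 * L ^ β₂}, cubeP d₁ d₂ j)ᶜ,
            ENNReal.ofReal (f (x - y))) ≤ ENNReal.ofReal (C / L ^ 2) := by
  obtain ⟨M, hM, hweight⟩ := exists_setLIntegral_norm_ge_union_le
    (volume : Measure (Fin d₁ → ℝ)) (volume : Measure (Fin d₂ → ℝ)) hα₁ hα₂
    (by simpa only [finrank_fin_fun] using hγ)
  simp only [finrank_fin_fun] at hweight
  refine ⟨f₀ * M, max 2 r₀, by positivity, lt_max_of_lt_left one_lt_two, fun L hL y hy ↦ ?_⟩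
  have hL1 : 1 ≤ L := le_trans (by norm_num) (le_max_left 2 r₀ |>.trans hL)
  have hLβ₁ : L ≤ L ^ β₁ := Real.self_le_rpow_of_one_le hL1 (hβ₁ ▸ le_max_left _ _)
  have hLβ₂ : L ≤ L ^ β₂ := Real.self_le_rpow_of_one_le hL1 (hβ₂ ▸ le_max_left _ _)
  have hr₀ : r₀ ≤ L := le_max_right 2 r₀ |>.trans hL
  have hγ' : 0 < 1 - ((d₁ : ℝ) / α₁ + (d₂ : ℝ) / α₂) := by linarith
  set Ω : Set ((Fin d₁ → ℝ) × (Fin d₂ → ℝ)) := {u | L ^ β₁ ≤ ‖u.1‖} ∪ {u | L ^ β₂ ≤ ‖u.2‖}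
  have hΩ : ∀ u ∈ Ω, r₀ ≤ max ‖u.1‖ ‖u.2‖ := by
    rintro u (hu | hu)
    · exact le_max_of_le_left (by simp only [mem_ofPred_eq] at hu; linarith)
    · exact le_max_of_le_right (by simp only [mem_ofPred_eq] at hu; linarith)
  calc _ ≤ ∫⁻ u in Ω, ENNReal.ofReal (f u) :=
        setLIntegral_compl_iUnion_cubeP_sub_le (by linarith) (by linarith) _ hy
    _ ≤ ENNReal.ofReal f₀ * ∫⁻ u in Ω, ENNReal.ofReal (1 / (‖u.1‖ ^ α₁ + ‖u.2‖ ^ α₂)) :=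
        setLIntegral_ofReal_le_ofReal_mul hf₀.le (by fun_prop) fun u hu ↦
          (mul_one_div f₀ _).symm ▸ h_upp u (hΩ u hu)
    _ ≤ ENNReal.ofReal f₀ * ENNReal.ofReal (M / L ^ 2) := by
      gcongr
      exact hweight hL1 (hβ₁ ▸ two_le_max_one_two_div_mul (by positivity))
        (hβ₂ ▸ two_le_max_one_two_div_mul (by positivity))
    _ = ENNReal.ofReal (f₀ * M / L ^ 2) := by rw [← ENNReal.ofReal_mul hf₀.le, mul_div_assoc]

/-- with `β_k = max{1, 2/(α_k(1-γ))}` and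
`Λ̃ = ⋃ {Λ_j : |j₁| ≤ 2L^{β₁}, |j₂| ≤ 2L^{β₂}}`, there are `C > 0` and `L₀ > 1` such
that for all `L ≥ L₀`, `sup_{|y| ≤ L/2} ∫_{ℝ^d ∖ Λ̃} f(x-y) dx ≤ C L⁻²`. -/
theorem statement14 (d₁ d₂ : ℕ) (hd₁ : 0 < d₁) (hd₂ : 0 < d₂)
    (f : (Fin d₁ → ℝ) × (Fin d₂ → ℝ) → ℝ)
    (hf_meas : Measurable f) (hf_nonneg : ∀ x, 0 ≤ f x)
    (α₁ α₂ : ℝ) (hα₁ : 0 < α₁) (hα₂ : 0 < α₂)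
    (hγ : (d₁ : ℝ) / α₁ + (d₂ : ℝ) / α₂ < 1)
    (f_u f₀ r₀ : ℝ) (hfu : 0 < f_u) (hf₀ : 0 < f₀) (hr₀ : 0 < r₀)
    (h_low : ∀ x : (Fin d₁ → ℝ) × (Fin d₂ → ℝ), r₀ ≤ max ‖x.1‖ ‖x.2‖ →
      ENNReal.ofReal (f_u / (‖x.1‖ ^ α₁ + ‖x.2‖ ^ α₂)) ≤
        ∫⁻ y in cubeP d₁ d₂ 0, ENNReal.ofReal (f (y - x)))
    (h_upp : ∀ x : (Fin d₁ → ℝ) × (Fin d₂ → ℝ), r₀ ≤ max ‖x.1‖ ‖x.2‖ →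
      f x ≤ f₀ / (‖x.1‖ ^ α₁ + ‖x.2‖ ^ α₂))
    (β₁ β₂ : ℝ)
    (hβ₁ : β₁ = max 1 (2 / (α₁ * (1 - ((d₁ : ℝ) / α₁ + (d₂ : ℝ) / α₂)))))
    (hβ₂ : β₂ = max 1 (2 / (α₂ * (1 - ((d₁ : ℝ) / α₁ + (d₂ : ℝ) / α₂))))) :
    ∃ C L₀ : ℝ, 0 < C ∧ 1 < L₀ ∧
      ∀ L : ℝ, L₀ ≤ L →
      ∀ y : (Fin d₁ → ℝ) × (Fin d₂ → ℝ), ‖y‖ ≤ L / 2 →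
        (∫⁻ x in (⋃ j ∈ {j : (Fin d₁ → ℤ) × (Fin d₂ → ℤ) |
              ‖j.1‖ ≤ 2 * L ^ β₁ ∧ ‖j.2‖ ≤ 2 * L ^ β₂}, cubeP d₁ d₂ j)ᶜ,
            ENNReal.ofReal (f (x - y))) ≤ ENNReal.ofReal (C / L ^ 2) :=
  statement14_general d₁ d₂ f α₁ α₂ hα₁ hα₂ hγ f₀ r₀ hf₀ h_upp β₁ β₂ hβ₁ hβ₂
end
end
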